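/- arXiv:2507.13327 — 2 statements merged into one kernel-verified Lean document; each statement's English description precedes it below -/
import Mathlib

section
/- Let G be a d-regular finite simple graph on n ≥ 2 vertices. Then there exist 2n − 2 linearly independent eigenvectors of the adjacency matrix of the Mycielskian M(G) (whose vertex set has size 2n + 1), each of which vanishes at the central vertex u and is orthogonal to the all-ones vector on V(M(G)); consequently the singleton {u} is a graphical design of M(G) averaging 2n − 2 of the 2n + 1 adjacency eigenvectors. -/
open Finset Matrix


variable {V : Type*}

/-- Adjacency relation of the Mycielskian of `G`: vertex set `V ⊔ V' ⊔ {u}`,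
with `v ~ w` for edges `vw` of `G`, `v ~ w'` and `v' ~ w` for edges `vw` of `G`,
and `u ~ v'` for every `v`. -/
def mycAdj (G : SimpleGraph V) : V ⊕ V ⊕ Unit → V ⊕ V ⊕ Unit → Prop
  | Sum.inl v, Sum.inl w => G.Adj v w
  | Sum.inl v, Sum.inr (Sum.inl w) => G.Adj v w
  | Sum.inr (Sum.inl v), Sum.inl w => G.Adj v w
  | Sum.inr (Sum.inl _), Sum.inr (Sum.inr _) => True
  | Sum.inr (Sum.inr _), Sum.inr (Sum.inl _) => True
  | _, _ => False

/-- The Mycielskian of a simple graph `G`. -/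
def mycielskian (G : SimpleGraph V) : SimpleGraph (V ⊕ V ⊕ Unit) where
  Adj := mycAdj G
  symm := by
    constructor
    rintro (v | v | v) (w | w | w) h <;> simp only [mycAdj] at h ⊢ <;>
      first
        | exact G.adj_symm h
        | exact h
        | trivial
  loopless := by
    constructor
    rintro (v | v | v) h <;> simp only [mycAdj] at h <;>
      first
        | exact G.irrefl h
        | exact h

instance (G : SimpleGraph V) [DecidableRel G.Adj] : DecidableRel (mycielskian G).Adj :=
  fun a b =>
    match a, b with
    | Sum.inl v, Sum.inl w => inferInstanceAs (Decidable (G.Adj v w))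
    | Sum.inl v, Sum.inr (Sum.inl w) => inferInstanceAs (Decidable (G.Adj v w))
    | Sum.inl _, Sum.inr (Sum.inr _) => inferInstanceAs (Decidable False)
    | Sum.inr (Sum.inl v), Sum.inl w => inferInstanceAs (Decidable (G.Adj v w))
    | Sum.inr (Sum.inl _), Sum.inr (Sum.inl _) => inferInstanceAs (Decidable False)
    | Sum.inr (Sum.inl _), Sum.inr (Sum.inr _) => inferInstanceAs (Decidable True)
    | Sum.inr (Sum.inr _), Sum.inl _ => inferInstanceAs (Decidable False)
    | Sum.inr (Sum.inr _), Sum.inr (Sum.inl _) => inferInstanceAs (Decidable True)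
    | Sum.inr (Sum.inr _), Sum.inr (Sum.inr _) => inferInstanceAs (Decidable False)

/-!
Let `W` be the space of vectors on `V ⊔ V' ⊔ {u}` that vanish at `u` and sum to zero on `V` and
on `V'`; it is cut out by three linear functionals, so `dim W ≥ 2n - 2`. If `G` is
`d`-regular, summing `A z` over `V` gives `d` times the sums of `z` over `V` and `V'`, summing it
over `V'` gives `d` times the sum over `V` plus `n z(u)`, and `(A z)(u)` is the sum over `V'`;
so `W` is invariant under the symmetric matrix `A = A(M(G))`, and an orthonormal eigenbasis of
`A` restricted to `W` gives the required eigenvectors.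
-/

theorem LinearMap.IsSymmetric.exists_linearIndependent_eigenvectors_of_le_finrank
    {𝕜 E : Type*} [RCLike 𝕜] [NormedAddCommGroup E] [InnerProductSpace 𝕜 E]
    [FiniteDimensional 𝕜 E] {T : E →ₗ[𝕜] E} (hT : T.IsSymmetric) {W : Submodule 𝕜 E}
    (hW : ∀ x ∈ W, T x ∈ W) {m : ℕ} (hm : m ≤ Module.finrank 𝕜 W) :
    ∃ z : Fin m → E, LinearIndependent 𝕜 z ∧ ∀ j, z j ∈ W ∧ ∃ μ : 𝕜, T (z j) = μ • z j := by
  have hTW := hT.restrict_invariant hW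
  let b := hTW.eigenvectorBasis rfl
  let i : Fin m → Fin (Module.finrank 𝕜 W) := Fin.castLE hm
  refine ⟨fun j => b (i j), ?_, fun j => ⟨(b (i j)).2, hTW.eigenvalues rfl (i j), ?_⟩⟩
  · exact (b.toBasis.linearIndependent.comp i (Fin.castLE_injective hm)).map' W.subtype
      W.ker_subtype
  · exact congrArg Subtype.val (hTW.apply_eigenvectorBasis rfl (i j))

theorem Matrix.IsHermitian.exists_linearIndependent_eigenvectors_of_le_finrank
    {𝕜 n : Type*} [RCLike 𝕜] [Fintype n] [DecidableEq n] {A : Matrix n n 𝕜}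
    (hA : A.IsHermitian) {W : Submodule 𝕜 (n → 𝕜)} (hW : ∀ x ∈ W, A *ᵥ x ∈ W) {m : ℕ}
    (hm : m ≤ Module.finrank 𝕜 W) :
    ∃ z : Fin m → n → 𝕜, LinearIndependent 𝕜 z ∧ ∀ j, z j ∈ W ∧ ∃ μ : 𝕜, A *ᵥ z j = μ • z j := by
  let e := (WithLp.linearEquiv 2 𝕜 (n → 𝕜)).symm
  have hWe : ∀ x ∈ W.map e.toLinearMap, toEuclideanLin A x ∈ W.map e.toLinearMap := by
    rintro _ ⟨x, hx, rfl⟩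
    exact ⟨A *ᵥ x, hW x hx, rfl⟩
  obtain ⟨z, hz, hzW⟩ := (isSymmetric_toEuclideanLin_iff.mpr hA)
    |>.exists_linearIndependent_eigenvectors_of_le_finrank hWe (m := m) (by rwa [e.finrank_map_eq])
  refine ⟨fun j => (z j).ofLp, hz.map' e.symm.toLinearMap e.symm.ker, fun j => ?_⟩
  obtain ⟨hzjW, μ, hμ⟩ := hzW j
  exact ⟨(W.mem_map_equiv).mp hzjW, μ, congrArg WithLp.ofLp hμ⟩

theorem SimpleGraph.IsRegularOfDegree.sum_adjMatrix_mulVec {α : Type*} [Fintype V]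
    {G : SimpleGraph V} [DecidableRel G.Adj] [CommSemiring α] {d : ℕ}
    (hG : G.IsRegularOfDegree d) (f : V → α) :
    ∑ v, (G.adjMatrix α *ᵥ f) v = d * ∑ v, f v := by
  have hrow : (1 : V → α) ᵥ* G.adjMatrix α = fun _ => (d : α) := by
    rw [← G.transpose_adjMatrix (α := α), vecMul_transpose]
    funext v
    simpa using G.adjMatrix_mulVec_const_apply_of_regular (α := α) (a := 1) hG (v := v)
  calc ∑ v, (G.adjMatrix α *ᵥ f) v = (1 : V → α) ⬝ᵥ (G.adjMatrix α *ᵥ f) :=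
        (one_dotProduct _).symm
    _ = d * ∑ v, f v := by rw [dotProduct_mulVec, hrow, dotProduct, mul_sum]

namespace SimpleGraph

section adj

variable {G : SimpleGraph V} {v w : V} {x : Unit}

@[simp] theorem mycielskian_adj_inl_inl :
    (mycielskian G).Adj (Sum.inl v) (Sum.inl w) ↔ G.Adj v w := Iff.rfl
@[simp] theorem mycielskian_adj_inl_inr_inl :
    (mycielskian G).Adj (Sum.inl v) (Sum.inr (Sum.inl w)) ↔ G.Adj v w := Iff.rfl
@[simp] theorem mycielskian_adj_inr_inl_inl :
    (mycielskian G).Adj (Sum.inr (Sum.inl v)) (Sum.inl w) ↔ G.Adj v w := Iff.rfl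
@[simp] theorem mycielskian_adj_inr_inl_inr_inr :
    (mycielskian G).Adj (Sum.inr (Sum.inl v)) (Sum.inr (Sum.inr x)) := trivial
@[simp] theorem mycielskian_adj_inr_inr_inr_inl :
    (mycielskian G).Adj (Sum.inr (Sum.inr x)) (Sum.inr (Sum.inl w)) := trivial
@[simp] theorem not_mycielskian_adj_inl_inr_inr :
    ¬(mycielskian G).Adj (Sum.inl v) (Sum.inr (Sum.inr x)) := id
@[simp] theorem not_mycielskian_adj_inr_inl_inr_inl :
    ¬(mycielskian G).Adj (Sum.inr (Sum.inl v)) (Sum.inr (Sum.inl w)) := id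
@[simp] theorem not_mycielskian_adj_inr_inr_inl :
    ¬(mycielskian G).Adj (Sum.inr (Sum.inr x)) (Sum.inl w) := id

end adj

section adjMatrix

variable {R : Type*} [Fintype V] (G : SimpleGraph V) [DecidableRel G.Adj] [NonAssocSemiring R]
  (z : V ⊕ V ⊕ Unit → R) (v : V)

theorem mycielskian_adjMatrix_mulVec_inl :
    ((mycielskian G).adjMatrix R *ᵥ z) (Sum.inl v) =
      (G.adjMatrix R *ᵥ (z ∘ Sum.inl)) v + (G.adjMatrix R *ᵥ (z ∘ Sum.inr ∘ Sum.inl)) v := by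
  simp [mulVec, dotProduct, Fintype.sum_sum_type]

theorem mycielskian_adjMatrix_mulVec_inr_inl :
    ((mycielskian G).adjMatrix R *ᵥ z) (Sum.inr (Sum.inl v)) =
      (G.adjMatrix R *ᵥ (z ∘ Sum.inl)) v + z (Sum.inr (Sum.inr ())) := by
  simp [mulVec, dotProduct, Fintype.sum_sum_type]

theorem mycielskian_adjMatrix_mulVec_inr_inr :
    ((mycielskian G).adjMatrix R *ᵥ z) (Sum.inr (Sum.inr ())) = ∑ v, z (Sum.inr (Sum.inl v)) := by
  simp [mulVec, dotProduct, Fintype.sum_sum_type]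

end adjMatrix

section balanced

def mycielskianBalanced (R V : Type*) [CommRing R] [Fintype V] :
    Submodule R (V ⊕ V ⊕ Unit → R) :=
  LinearMap.ker <| LinearMap.pi ![LinearMap.proj (Sum.inr (Sum.inr ())),
    ∑ v, LinearMap.proj (Sum.inl v), ∑ v, LinearMap.proj (Sum.inr (Sum.inl v))]

variable {R : Type*} [Fintype V]

theorem mem_mycielskianBalanced [CommRing R] {z : V ⊕ V ⊕ Unit → R} :
    z ∈ mycielskianBalanced R V ↔ z (Sum.inr (Sum.inr ())) = 0 ∧
      ∑ v, z (Sum.inl v) = 0 ∧ ∑ v, z (Sum.inr (Sum.inl v)) = 0 := by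
  simp [mycielskianBalanced, funext_iff, Fin.forall_fin_succ]

theorem sum_eq_zero_of_mem_mycielskianBalanced [CommRing R] {z : V ⊕ V ⊕ Unit → R}
    (hz : z ∈ mycielskianBalanced R V) : ∑ w, z w = 0 := by
  obtain ⟨hu, hV, hV'⟩ := mem_mycielskianBalanced.mp hz
  simp [Fintype.sum_sum_type, hu, hV, hV']

theorem le_finrank_mycielskianBalanced [Field R] :
    2 * Fintype.card V - 2 ≤ Module.finrank R (mycielskianBalanced R V) := by
  obtain ⟨f, hf⟩ : ∃ f : (V ⊕ V ⊕ Unit → R) →ₗ[R] Fin 3 → R,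
      mycielskianBalanced R V = LinearMap.ker f := ⟨_, rfl⟩
  have hrank := f.finrank_range_add_finrank_ker
  have hrange := (LinearMap.range f).finrank_le
  simp only [Module.finrank_fintype_fun_eq_card, Fintype.card_fin, Fintype.card_sum,
    Fintype.card_unit] at hrank hrange
  rw [hf]
  omega

theorem IsRegularOfDegree.mycielskian_adjMatrix_mulVec_mem_mycielskianBalanced [CommRing R]
    {G : SimpleGraph V} [DecidableRel G.Adj] {d : ℕ} (hG : G.IsRegularOfDegree d)
    {z : V ⊕ V ⊕ Unit → R} (hz : z ∈ mycielskianBalanced R V) :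
    (mycielskian G).adjMatrix R *ᵥ z ∈ mycielskianBalanced R V := by
  obtain ⟨hu, hV, hV'⟩ := mem_mycielskianBalanced.mp hz
  simp only [mem_mycielskianBalanced, mycielskian_adjMatrix_mulVec_inl,
    mycielskian_adjMatrix_mulVec_inr_inl, mycielskian_adjMatrix_mulVec_inr_inr, sum_add_distrib,
    hG.sum_adjMatrix_mulVec, Function.comp_apply, hu, hV, hV', mul_zero, add_zero,
    and_self]

end balanced

end SimpleGraph

theorem mycielskian_central_vertex_design_general
    {V : Type*} [Fintype V] (G : SimpleGraph V) [DecidableRel G.Adj]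
    (d n : ℕ) (hreg : G.IsRegularOfDegree d) (hn : Fintype.card V = n) :
    Fintype.card (V ⊕ V ⊕ Unit) = 2 * n + 1 ∧
    ∃ z : Fin (2 * n - 2) → (V ⊕ V ⊕ Unit → ℝ),
      LinearIndependent ℝ z ∧
      ∀ j, (∃ μ : ℝ, (mycielskian G).adjMatrix ℝ *ᵥ z j = μ • z j) ∧
        z j (Sum.inr (Sum.inr ())) = 0 ∧
        ∑ w, z j w * 1 = 0 := by
  classical
  subst hn
  refine ⟨by simp only [Fintype.card_sum, Fintype.card_unit]; ring, ?_⟩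
  obtain ⟨z, hz, hzW⟩ := ((mycielskian G).isHermitian_adjMatrix ℝ)
    |>.exists_linearIndependent_eigenvectors_of_le_finrank
      (fun _ => hreg.mycielskian_adjMatrix_mulVec_mem_mycielskianBalanced)
      SimpleGraph.le_finrank_mycielskianBalanced
  refine ⟨z, hz, fun j => ⟨(hzW j).2, (SimpleGraph.mem_mycielskianBalanced.mp (hzW j).1).1, ?_⟩⟩
  simpa using SimpleGraph.sum_eq_zero_of_mem_mycielskianBalanced (hzW j).1

/-- For a `d`-regular graph `G` on `n ≥ 2` vertices, the Mycielskian `M(G)` has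
`2n+1` vertices and there exist `2n − 2` linearly independent eigenvectors of its
adjacency matrix, each vanishing at the central vertex `u` and orthogonal to the
all-ones vector; hence `{u}` is a graphical design averaging `2n − 2` of the `2n + 1`
adjacency eigenvectors. -/
theorem mycielskian_central_vertex_design
    {V : Type*} [Fintype V] [DecidableEq V] (G : SimpleGraph V) [DecidableRel G.Adj]
    (d n : ℕ) (hreg : G.IsRegularOfDegree d) (hn : Fintype.card V = n) (hn2 : 2 ≤ n) :
    Fintype.card (V ⊕ V ⊕ Unit) = 2 * n + 1 ∧
    ∃ z : Fin (2 * n - 2) → (V ⊕ V ⊕ Unit → ℝ),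
      LinearIndependent ℝ z ∧
      ∀ j, (∃ μ : ℝ, (mycielskian G).adjMatrix ℝ *ᵥ z j = μ • z j) ∧
        z j (Sum.inr (Sum.inr ())) = 0 ∧
        ∑ w, z j w * 1 = 0 :=
  mycielskian_central_vertex_design_general G d n hreg hn
end

section
/- Let G be a d-regular finite simple graph on n vertices and let D be a nonempty subset of V(M(G)). Suppose that for every μ ∈ ℝ and every x : V → ℝ with A(G) x = μ x and ∑_{v∈V} x(v) = 0, one has both ∑_{v∈V : v∈D} x(v) − φ̄·∑_{v∈V : v'∈D} x(v) = 0 and ∑_{v∈V : v∈D} x(v) − φ·∑_{v∈V : v'∈D} x(v) = 0 (i.e., D averages all 2n − 2 eigenvectors of the adjacency matrix of M(G) that arise from eigenvectors of A(G) orthogonal to the all-ones vector). Then either D = {u} or |D| ≥ n. -/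
open Finset Matrix


variable {V : Type*}

/-! For a regular graph, subtracting its mean from an eigenvector of `A(G)` leaves an eigenvector
(either the mean is `0` or the eigenvalue is the degree), now orthogonal to the all-ones vector.
Hence a set `S ⊆ V` averaging all such eigenvectors satisfies `∑_{v ∈ S} x v = |S| · mean x` for
every eigenvector `x`, i.e. `1_S - (|S|/n) 1` is orthogonal to an eigenbasis, so it vanishes and
`S = ∅` or `S = V`. Since `φ ≠ φ̄`, the hypothesis makes `D ∩ V` and `D ∩ V'` average these
eigenvectors separately. -/

theorem Matrix.IsHermitian.eq_zero_of_forall_eigenvector_dotProduct_eq_zero {n : Type*}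
    [Fintype n] [DecidableEq n] {A : Matrix n n ℝ} (hA : A.IsHermitian) {y : n → ℝ}
    (h : ∀ (μ : ℝ) (x : n → ℝ), A *ᵥ x = μ • x → x ⬝ᵥ y = 0) : y = 0 := by
  have : WithLp.toLp 2 y = 0 := by
    refine InnerProductSpace.ext_inner_left_basis hA.eigenvectorBasis.toBasis fun j => ?_
    rw [inner_zero_right, OrthonormalBasis.coe_toBasis, EuclideanSpace.inner_eq_star_dotProduct,
      star_trivial, dotProduct_comm]
    exact h _ _ (hA.mulVec_eigenvectorBasis j)
  simpa using congrArg WithLp.ofLp this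

namespace SimpleGraph

variable [Fintype V] {G : SimpleGraph V} [DecidableRel G.Adj] {d : ℕ}

theorem IsRegularOfDegree.sum_adjMatrix_mulVec_s18 {α : Type*} [CommSemiring α]
    (hreg : G.IsRegularOfDegree d) (x : V → α) :
    ∑ v, (G.adjMatrix α *ᵥ x) v = d * ∑ v, x v := by
  have hones : (fun _ => 1 : V → α) ᵥ* G.adjMatrix α = fun _ => (d : α) := by
    ext v
    rw [← mulVec_transpose, transpose_adjMatrix]
    simpa using adjMatrix_mulVec_const_apply_of_regular (a := (1 : α)) hreg (v := v)
  calc ∑ v, (G.adjMatrix α *ᵥ x) v = (fun _ => 1) ⬝ᵥ G.adjMatrix α *ᵥ x := by simp [dotProduct]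
    _ = d * ∑ v, x v := by rw [dotProduct_mulVec, hones]; simp [dotProduct, mul_sum]

theorem IsRegularOfDegree.adjMatrix_mulVec_sub_mean (hreg : G.IsRegularOfDegree d) {μ : ℝ}
    {x : V → ℝ} (hx : G.adjMatrix ℝ *ᵥ x = μ • x) :
    G.adjMatrix ℝ *ᵥ (x - Function.const V ((∑ v, x v) / Fintype.card V)) =
      μ • (x - Function.const V ((∑ v, x v) / Fintype.card V)) := by
  have hμ : μ * ∑ v, x v = d * ∑ v, x v := by
    rw [← hreg.sum_adjMatrix_mulVec_s18 x, hx, mul_sum]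
    rfl
  ext v
  have hconst := adjMatrix_mulVec_const_apply_of_regular
    (a := (∑ v, x v) / Fintype.card V) hreg (v := v)
  rw [mulVec_sub, Pi.sub_apply, hx, hconst]
  simp only [Pi.smul_apply, Pi.sub_apply, Function.const_apply, smul_eq_mul]
  linear_combination hμ / (Fintype.card V : ℝ)

theorem IsRegularOfDegree.eq_empty_or_eq_univ_of_sum_eigenvector_eq_zero [DecidableEq V]
    (hreg : G.IsRegularOfDegree d) (s : Finset V)
    (hs : ∀ (μ : ℝ) (x : V → ℝ), G.adjMatrix ℝ *ᵥ x = μ • x → ∑ v, x v = 0 → ∑ v ∈ s, x v = 0) :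
    s = ∅ ∨ s = univ := by
  rcases isEmpty_or_nonempty V with hV | hV
  · exact Or.inl s.eq_empty_of_isEmpty
  have hn : (Fintype.card V : ℝ) ≠ 0 := Nat.cast_ne_zero.mpr Fintype.card_ne_zero
  set y : V → ℝ := fun v => (if v ∈ s then 1 else 0) - #s / Fintype.card V
  have hy : y = 0 := by
    refine (G.isHermitian_adjMatrix ℝ).eq_zero_of_forall_eigenvector_dotProduct_eq_zero
      fun μ x hx => ?_
    have hcentred := hs μ _ (hreg.adjMatrix_mulVec_sub_mean hx) (by
      simp [sum_sub_distrib, mul_div_cancel₀ _ hn])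
    simp only [Pi.sub_apply, Function.const_apply, sum_sub_distrib, sum_const,
      nsmul_eq_mul] at hcentred
    simp only [y, dotProduct, mul_sub, sum_sub_distrib, mul_ite, mul_one, mul_zero,
      sum_ite_mem, univ_inter, ← sum_mul]
    linear_combination hcentred
  rcases s.eq_empty_or_nonempty with hs | ⟨v₀, hv₀⟩
  · exact Or.inl hs
  refine Or.inr (eq_univ_of_forall fun v => ?_)
  by_contra hv
  have h₀ := congrFun hy v₀
  have h₁ := congrFun hy v
  simp only [y, hv₀, hv, if_true, if_false, Pi.zero_apply] at h₀ h₁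
  linarith

end SimpleGraph

theorem eq_zero_of_sub_mul_eq_zero_of_sub_mul_eq_zero {K : Type*} [Field K] {a b r t : K}
    (hrt : r ≠ t) (hr : a - r * b = 0) (ht : a - t * b = 0) : a = 0 ∧ b = 0 := by
  have hb : b = 0 :=
    (mul_eq_zero.mp (by linear_combination ht - hr : (r - t) * b = 0)).resolve_left
      (sub_ne_zero.mpr hrt)
  exact ⟨by simpa [hb] using hr, hb⟩

/-- Let `G` be `d`-regular on `n` vertices and let `D` be a nonempty subset of the
vertices of the Mycielskian `M(G)` averaging all `2n − 2` adjacency eigenvectors of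
`M(G)` arising from eigenvectors of `A(G)` orthogonal to the all-ones vector (i.e.
for every such eigenvector `x`, the sums of `(x, −φ̄x, 0)` and `(x, −φx, 0)` over `D`
vanish). Then either `D = {u}` or `|D| ≥ n`. -/
theorem mycielskian_design_size
    {V : Type*} [Fintype V] [DecidableEq V] (G : SimpleGraph V) [DecidableRel G.Adj]
    (d n : ℕ) (hreg : G.IsRegularOfDegree d) (hn : Fintype.card V = n)
    (D : Finset (V ⊕ V ⊕ Unit)) (hne : D.Nonempty)
    (hD : ∀ (μ : ℝ) (x : V → ℝ), G.adjMatrix ℝ *ᵥ x = μ • x → ∑ v, x v = 0 →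
      (∑ v ∈ Finset.univ.filter (fun v : V => Sum.inl v ∈ D), x v) -
          Real.goldenConj * (∑ v ∈ Finset.univ.filter (fun v : V => Sum.inr (Sum.inl v) ∈ D), x v)
        = 0 ∧
      (∑ v ∈ Finset.univ.filter (fun v : V => Sum.inl v ∈ D), x v) -
          Real.goldenRatio * (∑ v ∈ Finset.univ.filter (fun v : V => Sum.inr (Sum.inl v) ∈ D), x v)
        = 0) :
    D = {Sum.inr (Sum.inr ())} ∨ n ≤ D.card := by
  have hsplit μ x hx hsum := eq_zero_of_sub_mul_eq_zero_of_sub_mul_eq_zero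
    (Real.goldenConj_neg.trans Real.goldenRatio_pos).ne (hD μ x hx hsum).1 (hD μ x hx hsum).2
  have card_le {f : V → V ⊕ V ⊕ Unit} (hf : f.Injective) (hfD : ∀ v, f v ∈ D) : n ≤ #D :=
    hn ▸ card_le_card_of_injOn f (fun v _ => hfD v) hf.injOn
  rcases hreg.eq_empty_or_eq_univ_of_sum_eigenvector_eq_zero _
      fun μ x hx hsum => (hsplit μ x hx hsum).1 with h₁ | h₁ <;>
    simp only [filter_eq_empty_iff, filter_eq_self, mem_univ, true_imp_iff] at h₁
  · rcases hreg.eq_empty_or_eq_univ_of_sum_eigenvector_eq_zero _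
        fun μ x hx hsum => (hsplit μ x hx hsum).2 with h₂ | h₂ <;>
      simp only [filter_eq_empty_iff, filter_eq_self, mem_univ, true_imp_iff] at h₂
    · refine Or.inl (hne.subset_singleton_iff.mp ?_)
      rintro (v | v | ⟨⟩) hv
      exacts [(h₁ hv).elim, (h₂ hv).elim, mem_singleton_self _]
    · exact Or.inr (card_le (Sum.inr_injective.comp Sum.inl_injective) h₂)
  · exact Or.inr (card_le Sum.inl_injective h₁)
end
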